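/- arXiv:2110.10936 — 3 statements merged into one kernel-verified Lean document; each statement's English description precedes it below -/
import Mathlib

section
/- (Joint Distribution of the default times.) For all t_1, t_2, …, t_K ≥ 0, P(τ_1 > t_1, τ_2 > t_2, …, τ_K > t_K) = exp(−Σ_{i=1}^{K} A_i(t_i) − A_0(max(t_1, t_2, …, t_K))). -/
/-!
Because each `A_i` is continuous and nondecreasing, `s < η_i` holds exactly when `A_i(s) < Z_i`.
Hence `τ_i > t_i` for all `i` means `Z_0 > A_0(max_i t_i)` and `Z_i > A_i(t_i)` for every
`i ≥ 1`: an intersection of independent events with probabilities `exp (-A_0(max_i t_i))` and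
`exp (-A_i(t_i))`.
-/

open MeasureTheory ProbabilityTheory

/-- The cumulative hazard `A(t) = ∫_0^t α(s) ds`. -/
noncomputable def cumHaz (α : ℝ → ℝ) (t : ℝ) : ℝ := ∫ s in (0:ℝ)..t, α s

/-- The first time `s ≥ 0` at which the cumulative hazard reaches level `z`,
i.e. `inf {s ≥ 0 : A(s) ≥ z}`. -/
noncomputable def hitTime (α : ℝ → ℝ) (z : ℝ) : ℝ :=
  sInf {s : ℝ | 0 ≤ s ∧ z ≤ cumHaz α s}

open Set

theorem lt_sInf_setOf_le_iff {A : ℝ → ℝ} (hcont : ContinuousOn A (Ici 0))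
    (hmono : MonotoneOn A (Ici 0)) {z : ℝ} (hz : ∃ u, 0 ≤ u ∧ z ≤ A u) {s : ℝ}
    (hs : 0 ≤ s) :
    s < sInf {u | 0 ≤ u ∧ z ≤ A u} ↔ A s < z := by
  set S := {u | 0 ≤ u ∧ z ≤ A u}
  have hbdd : BddBelow S := ⟨0, fun u hu => hu.1⟩
  have hclosed : IsClosed S :=
    hcont.preimage_isClosed_of_isClosed isClosed_Ici isClosed_Ici
  constructor
  · intro h
    by_contra! hle
    exact (csInf_le hbdd ⟨hs, hle⟩).not_gt h
  · intro h
    by_contra! hle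
    have hmem : sInf S ∈ S := hclosed.csInf_mem hz hbdd
    exact (hmem.2.trans (hmono hmem.1 hs hle)).not_gt h

section cumHaz

variable {α : ℝ → ℝ}

theorem cumHaz_nonneg (hnonneg : ∀ t, 0 ≤ t → 0 ≤ α t) {t : ℝ} (ht : 0 ≤ t) :
    0 ≤ cumHaz α t :=
  intervalIntegral.integral_nonneg ht fun s hs => hnonneg s hs.1

theorem monotoneOn_cumHaz (hcont : ContinuousOn α (Ici 0))
    (hnonneg : ∀ t, 0 ≤ t → 0 ≤ α t) :
    MonotoneOn (cumHaz α) (Ici 0) := by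
  intro a ha b hb hab
  refine intervalIntegral.integral_mono_interval le_rfl ha hab ?_ ?_
  · filter_upwards [ae_restrict_mem measurableSet_Ioc] with s hs using hnonneg s hs.1.le
  · exact (hcont.mono Icc_subset_Ici_self).intervalIntegrable_of_Icc hb

theorem continuousOn_cumHaz (hcont : ContinuousOn α (Ici 0)) :
    ContinuousOn (cumHaz α) (Ici 0) := by
  intro x hx
  have hIcc : uIcc 0 (x + 1) = Icc 0 (x + 1) := uIcc_of_le (by linarith [hx.out])
  have hprim := intervalIntegral.continuousOn_primitive_interval (μ := volume) (a := 0)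
    (b := x + 1) (f := α) (by rw [hIcc]; exact (hcont.mono Icc_subset_Ici_self).integrableOn_Icc)
  rw [hIcc] at hprim
  refine (hprim x ⟨hx, by linarith⟩).mono_of_mem_nhdsWithin ?_
  exact Filter.mem_of_superset (inter_mem_nhdsWithin _ (Iio_mem_nhds (lt_add_one x)))
    fun y hy => ⟨hy.1, hy.2.le⟩

theorem lt_hitTime_iff (hcont : ContinuousOn α (Ici 0)) (hnonneg : ∀ t, 0 ≤ t → 0 ≤ α t)
    (hinf : Filter.Tendsto (cumHaz α) Filter.atTop Filter.atTop) {s : ℝ} (hs : 0 ≤ s)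
    (z : ℝ) :
    s < hitTime α z ↔ cumHaz α s < z := by
  refine lt_sInf_setOf_le_iff (continuousOn_cumHaz hcont) (monotoneOn_cumHaz hcont hnonneg) ?_ hs
  obtain ⟨u, hu⟩ := ((hinf.eventually_ge_atTop z).and (Filter.eventually_ge_atTop 0)).exists
  exact ⟨u, hu.2, hu.1⟩

end cumHaz

theorem measure_forall_lt_eq_exp_neg_sum {Ω ι : Type*} [MeasurableSpace Ω] {P : Measure Ω}
    [Fintype ι] {Z : ι → Ω → ℝ} (hind : iIndepFun Z P)
    (hexp : ∀ i, ∀ t : ℝ, 0 ≤ t → P {ω | t < Z i ω} = ENNReal.ofReal (Real.exp (-t)))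
    {c : ι → ℝ} (hc : ∀ i, 0 ≤ c i) :
    P {ω | ∀ i, c i < Z i ω} = ENNReal.ofReal (Real.exp (-∑ i, c i)) := by
  have hinter : {ω | ∀ i, c i < Z i ω} = ⋂ i, Z i ⁻¹' Ioi (c i) := by ext; simp
  rw [hinter, hind.meas_iInter fun i => ⟨Ioi (c i), measurableSet_Ioi, rfl⟩]
  simp only [preimage, mem_Ioi, hexp _ _ (hc _)]
  rw [← ENNReal.ofReal_prod_of_nonneg fun i _ => (Real.exp_pos _).le, ← Real.exp_sum,
    Finset.sum_neg_distrib]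

theorem joint_distribution_default_times_general
    {Ω : Type*} [MeasurableSpace Ω] (P : Measure Ω)
    (K : ℕ) (hK : 0 < K) (Z : Fin (K + 1) → Ω → ℝ) (α : Fin (K + 1) → ℝ → ℝ)
    (hZindep : iIndepFun Z P)
    (hZexp : ∀ i, ∀ t : ℝ, 0 ≤ t → P {ω | t < Z i ω} = ENNReal.ofReal (Real.exp (-t)))
    (hαpos : ∀ i t, 0 ≤ t → 0 < α i t)
    (hαcont : ∀ i, ContinuousOn (α i) (Set.Ici 0))
    (hAinf : ∀ i, Filter.Tendsto (cumHaz (α i)) Filter.atTop Filter.atTop)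
    (t : Fin K → ℝ) (ht : ∀ i, 0 ≤ t i) :
    P {ω | ∀ i : Fin K,
        t i < min (hitTime (α 0) (Z 0 ω)) (hitTime (α i.succ) (Z i.succ ω))}
      = ENNReal.ofReal (Real.exp (-(∑ i : Fin K, cumHaz (α i.succ) (t i))
          - cumHaz (α 0)
              (Finset.univ.sup' (Finset.univ_nonempty_iff.mpr (Fin.pos_iff_nonempty.mp hK)) t))) := by
  have hαnonneg : ∀ i t, 0 ≤ t → 0 ≤ α i t := fun i t ht => (hαpos i t ht).le
  set M := Finset.univ.sup' (Finset.univ_nonempty_iff.mpr (Fin.pos_iff_nonempty.mp hK)) t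
  have hM : 0 ≤ M := (ht ⟨0, hK⟩).trans (Finset.le_sup' t (Finset.mem_univ _))
  set c : Fin (K + 1) → ℝ := Fin.cons (cumHaz (α 0) M) fun i => cumHaz (α i.succ) (t i)
  have hc : ∀ i, 0 ≤ c i := Fin.cases (cumHaz_nonneg (hαnonneg 0) hM)
    fun i => cumHaz_nonneg (hαnonneg i.succ) (ht i)
  have hevent : {ω | ∀ i : Fin K,
      t i < min (hitTime (α 0) (Z 0 ω)) (hitTime (α i.succ) (Z i.succ ω))} =
      {ω | ∀ i, c i < Z i ω} := by
    ext ω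
    simp only [mem_ofPred_eq, lt_min_iff, forall_and, Fin.forall_fin_succ, c, Fin.cons_zero,
      Fin.cons_succ]
    refine and_congr ?_ (forall_congr' fun i =>
      lt_hitTime_iff (hαcont _) (hαnonneg _) (hAinf _) (ht i) _)
    rw [← lt_hitTime_iff (hαcont 0) (hαnonneg 0) (hAinf 0) hM, Finset.sup'_lt_iff]
    simp only [Finset.mem_univ, true_implies]
  rw [hevent, measure_forall_lt_eq_exp_neg_sum hZindep hZexp hc, Fin.sum_cons]
  congr 2
  ring

/-- (Joint distribution of the default times.) With
`η_i = inf {s ≥ 0 : A_i(s) ≥ Z_i}` and `τ_i = min (η_0, η_i)` for the banks `i = 1, …, K`,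
for all `t_1, …, t_K ≥ 0`,
`P(τ_1 > t_1, …, τ_K > t_K) = exp (−∑_{i=1}^K A_i(t_i) − A_0(max (t_1, …, t_K)))`. -/
theorem joint_distribution_default_times
    {Ω : Type*} [MeasurableSpace Ω] (P : Measure Ω) [IsProbabilityMeasure P]
    (K : ℕ) (hK : 0 < K) (Z : Fin (K + 1) → Ω → ℝ) (α : Fin (K + 1) → ℝ → ℝ)
    (hZmeas : ∀ i, Measurable (Z i))
    (hZindep : iIndepFun Z P)
    (hZexp : ∀ i, ∀ t : ℝ, 0 ≤ t → P {ω | t < Z i ω} = ENNReal.ofReal (Real.exp (-t)))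
    (hαpos : ∀ i t, 0 ≤ t → 0 < α i t)
    (hαcont : ∀ i, ContinuousOn (α i) (Set.Ici 0))
    (hAinf : ∀ i, Filter.Tendsto (cumHaz (α i)) Filter.atTop Filter.atTop)
    (t : Fin K → ℝ) (ht : ∀ i, 0 ≤ t i) :
    P {ω | ∀ i : Fin K,
        t i < min (hitTime (α 0) (Z 0 ω)) (hitTime (α i.succ) (Z i.succ ω))}
      = ENNReal.ofReal (Real.exp (-(∑ i : Fin K, cumHaz (α i.succ) (t i))
          - cumHaz (α 0)
              (Finset.univ.sup' (Finset.univ_nonempty_iff.mpr (Fin.pos_iff_nonempty.mp hK)) t))) :=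
  joint_distribution_default_times_general P K hK Z α hZindep hZexp hαpos hαcont hAinf t ht
end

section
/- (Permutation lower bound on the market failure probability.) For every ε > 0, P(|τ_i − τ_j| < ε for some pair (i,j) with 1 ≤ i, j ≤ K, i ≠ j) ≥ 1 − e^{−A_0((K−1)ε)} Σ_{σ ∈ S_K} exp( − Σ_{i=1}^{K−1} A_{σ(i+1)}(i ε) ), where the sum runs over all K! permutations σ of {1, …, K}. -/
/-!
Off the event, the times `τ_1, …, τ_K` are pairwise at least `ε` apart, so if `σ` lists them in
increasing order then `τ_{σ(m)} ≥ mε` (ranks counted from `0`); in particular `η_0 ≥ (K-1)ε` and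
`η_{σ(m)} ≥ mε`. As `η ≥ t > 0` forces `Z ≥ A(t)`, the complement of the event lies in the union
over `σ` of the boxes `{Z_0 ≥ A_0((K-1)ε)} ∩ ⋂_{m ≥ 1} {Z_{σ(m)} ≥ A_{σ(m)}(mε)}`, and by
independence and the exponential tails each box has probability at most
`exp (-A_0((K-1)ε) - ∑_m A_{σ(m)}(mε))`. A union bound over `σ` finishes.
-/

open MeasureTheory ProbabilityTheory

open Filter Topology Set

lemma measure_setOf_ge_le_ofReal_exp_neg {Ω : Type*} [MeasurableSpace Ω] {P : Measure Ω}
    [IsProbabilityMeasure P] {W : Ω → ℝ}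
    (hexp : ∀ t : ℝ, 0 ≤ t → P {ω | t < W ω} = ENNReal.ofReal (Real.exp (-t))) (a : ℝ) :
    P {ω | a ≤ W ω} ≤ ENNReal.ofReal (Real.exp (-a)) := by
  rcases le_or_gt a 0 with ha | ha
  · exact prob_le_one.trans (ENNReal.one_le_ofReal.2 (Real.one_le_exp (by linarith)))
  · have hlim : Tendsto (fun t => ENNReal.ofReal (Real.exp (-t))) (𝓝[<] a)
        (𝓝 (ENNReal.ofReal (Real.exp (-a)))) :=
      ((ENNReal.continuous_ofReal.comp (by fun_prop)).tendsto a).mono_left nhdsWithin_le_nhds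
    refine ge_of_tendsto hlim ?_
    filter_upwards [Ioo_mem_nhdsLT ha] with t ht
    rw [← hexp t ht.1.le]
    exact measure_mono fun ω hω => ht.2.trans_le hω

lemma cumHaz_le_of_le_hitTime {α : ℝ → ℝ} (hα : ContinuousOn α (Ici 0))
    {z t : ℝ} (ht : 0 < t) (h : t ≤ hitTime α z) : cumHaz α t ≤ z := by
  have hbelow : ∀ u ∈ Ico 0 t, cumHaz α u ≤ z := fun u hu => by
    by_contra! hzu
    have : hitTime α z ≤ u := csInf_le ⟨0, fun _ hx => hx.1⟩ ⟨hu.1, hzu.le⟩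
    linarith [hu.2]
  have hcont : ContinuousWithinAt (cumHaz α) (Ico 0 t) t := by
    have hint : IntegrableOn α (uIcc 0 t) := by
      rw [uIcc_of_le ht.le]
      exact (hα.mono Icc_subset_Ici_self).integrableOn_Icc
    refine (intervalIntegral.continuousOn_primitive_interval hint t right_mem_uIcc).mono ?_
    rw [uIcc_of_le ht.le]
    exact Ico_subset_Icc_self
  have : (𝓝[Ico 0 t] t).NeBot := by
    rw [← mem_closure_iff_nhdsWithin_neBot, closure_Ico ht.ne]
    exact right_mem_Icc.2 ht.le
  exact le_of_tendsto hcont (eventually_mem_nhdsWithin.mono hbelow)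

lemma hitTime_nonneg (α : ℝ → ℝ) (z : ℝ) : 0 ≤ hitTime α z :=
  Real.sInf_nonneg fun _ hx => hx.1

-- No constraint for `t ≤ 0`, where `t ≤ hitTime α z` says nothing about the sign of `z`.
noncomputable def lateLevels (α : ℝ → ℝ) (t : ℝ) : Set ℝ :=
  if 0 < t then Ici (cumHaz α t) else univ

lemma mem_lateLevels_of_le_hitTime {α : ℝ → ℝ} (hα : ContinuousOn α (Ici 0)) {z t : ℝ}
    (h : t ≤ hitTime α z) : z ∈ lateLevels α t := by
  unfold lateLevels
  split_ifs with ht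
  · exact cumHaz_le_of_le_hitTime hα ht h
  · trivial

lemma measurableSet_lateLevels (α : ℝ → ℝ) (t : ℝ) : MeasurableSet (lateLevels α t) := by
  unfold lateLevels
  split_ifs
  exacts [measurableSet_Ici, MeasurableSet.univ]

lemma measure_preimage_lateLevels_le {Ω : Type*} [MeasurableSpace Ω] {P : Measure Ω}
    [IsProbabilityMeasure P] {W : Ω → ℝ}
    (hexp : ∀ t : ℝ, 0 ≤ t → P {ω | t < W ω} = ENNReal.ofReal (Real.exp (-t)))
    (α : ℝ → ℝ) {t : ℝ} (ht : 0 ≤ t) :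
    P (W ⁻¹' lateLevels α t) ≤ ENNReal.ofReal (Real.exp (-cumHaz α t)) := by
  unfold lateLevels
  split_ifs with ht'
  · exact measure_setOf_ge_le_ofReal_exp_neg hexp _
  · simp [show t = 0 by linarith, cumHaz]

lemma measure_iInter_preimage_lateLevels_le {Ω ι : Type*} [Fintype ι] [MeasurableSpace Ω]
    {P : Measure Ω} [IsProbabilityMeasure P] {Z : ι → Ω → ℝ} (hZ : iIndepFun Z P)
    (hexp : ∀ i, ∀ t : ℝ, 0 ≤ t → P {ω | t < Z i ω} = ENNReal.ofReal (Real.exp (-t)))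
    (α : ι → ℝ → ℝ) {s : ι → ℝ} (hs : ∀ i, 0 ≤ s i) :
    P (⋂ i, Z i ⁻¹' lateLevels (α i) (s i)) ≤
      ENNReal.ofReal (Real.exp (-∑ i, cumHaz (α i) (s i))) := by
  rw [hZ.meas_iInter fun i => ⟨_, measurableSet_lateLevels (α i) (s i), rfl⟩,
    ← Finset.sum_neg_distrib, Real.exp_sum,
    ENNReal.ofReal_prod_of_nonneg fun _ _ => (Real.exp_pos _).le]
  exact Finset.prod_le_prod' fun i _ => measure_preimage_lateLevels_le (hexp i) (α i) (hs i)

lemma Tuple.natCast_mul_le_apply_sort {n : ℕ} (T : Fin n → ℝ) {ε : ℝ}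
    (hT : ∀ i, 0 ≤ T i) (hsep : ∀ i j, i ≠ j → ε ≤ |T i - T j|) (m : Fin n) :
    (m : ℕ) * ε ≤ T (Tuple.sort T m) := by
  rcases n with _ | n
  · exact m.elim0
  induction m using Fin.induction with
  | zero => simpa using hT _
  | succ i ih =>
    have hlt : i.castSucc < i.succ := Fin.castSucc_lt_succ
    have hsep' := hsep _ _ ((Tuple.sort T).injective.ne hlt.ne)
    have hmono : T (Tuple.sort T i.castSucc) ≤ T (Tuple.sort T i.succ) :=
      Tuple.monotone_sort T hlt.le
    rw [abs_sub_comm, abs_of_nonneg (sub_nonneg.2 hmono)] at hsep'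
    simp only [Fin.val_castSucc, Fin.val_succ, Nat.cast_succ] at ih ⊢
    linarith

lemma Fin.sum_univ_eq_add_sum_pred {M : Type*} [AddCommMonoid M] {K : ℕ} (hK : 0 < K)
    (f : Fin K → M) :
    ∑ m, f m = f ⟨0, hK⟩ + ∑ m : Fin (K - 1), f (Fin.cast (Nat.succ_pred_eq_of_pos hK) m.succ) := by
  obtain ⟨n, rfl⟩ := Nat.exists_eq_succ_of_ne_zero hK.ne'
  exact Fin.sum_univ_succ f

noncomputable def permThreshold (K : ℕ) (ε : ℝ) (σ : Equiv.Perm (Fin K)) : Fin (K + 1) → ℝ :=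
  Fin.cons ((K - 1 : ℕ) * ε) fun j => (σ.symm j : ℕ) * ε

lemma sum_cumHaz_permThreshold {K : ℕ} (hK : 0 < K) (α : Fin (K + 1) → ℝ → ℝ) (ε : ℝ)
    (σ : Equiv.Perm (Fin K)) :
    ∑ i, cumHaz (α i) (permThreshold K ε σ i) = cumHaz (α 0) ((K - 1 : ℕ) * ε) +
      ∑ m : Fin (K - 1),
        cumHaz (α (σ (Fin.cast (Nat.succ_pred_eq_of_pos hK) m.succ)).succ) (((m : ℕ) + 1) * ε) := by
  rw [Fin.sum_univ_succ, ← Equiv.sum_comp σ, Fin.sum_univ_eq_add_sum_pred hK]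
  simp [permThreshold, cumHaz]

lemma permThreshold_nonneg {K : ℕ} {ε : ℝ} (hε : 0 ≤ ε) (σ : Equiv.Perm (Fin K))
    (i : Fin (K + 1)) : 0 ≤ permThreshold K ε σ i := by
  cases i using Fin.cases <;> simp only [permThreshold, Fin.cons_zero, Fin.cons_succ] <;> positivity

lemma exists_perm_forall_mem_lateLevels {K : ℕ} (hK : 0 < K) {α : Fin (K + 1) → ℝ → ℝ}
    (hα : ∀ i, ContinuousOn (α i) (Ici 0)) {ε : ℝ} (z : Fin (K + 1) → ℝ)
    (hsep : ∀ i j : Fin K, i ≠ j →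
      ε ≤ |min (hitTime (α 0) (z 0)) (hitTime (α i.succ) (z i.succ))
        - min (hitTime (α 0) (z 0)) (hitTime (α j.succ) (z j.succ))|) :
    ∃ σ : Equiv.Perm (Fin K), ∀ i, z i ∈ lateLevels (α i) (permThreshold K ε σ i) := by
  set T : Fin K → ℝ := fun i => min (hitTime (α 0) (z 0)) (hitTime (α i.succ) (z i.succ))
  have hrank := Tuple.natCast_mul_le_apply_sort T
    (fun i => le_min (hitTime_nonneg _ _) (hitTime_nonneg _ _)) hsep
  refine ⟨Tuple.sort T, Fin.cases ?_ fun j => ?_⟩ <;>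
    refine mem_lateLevels_of_le_hitTime (hα _) ?_ <;>
    simp only [permThreshold, Fin.cons_zero, Fin.cons_succ]
  · exact (hrank ⟨K - 1, by omega⟩).trans (min_le_left _ _)
  · simpa using (hrank ((Tuple.sort T).symm j)).trans (min_le_right _ _)

-- A Lean index `m : Fin (K-1)` is the paper's `i = m + 1`.
theorem market_failure_probability_permutation_lower_bound_general
    {Ω : Type*} [MeasurableSpace Ω] (P : Measure Ω) [IsProbabilityMeasure P]
    (K : ℕ) (hK : 0 < K) (Z : Fin (K + 1) → Ω → ℝ) (α : Fin (K + 1) → ℝ → ℝ)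
    (hZindep : iIndepFun Z P)
    (hZexp : ∀ i, ∀ t : ℝ, 0 ≤ t → P {ω | t < Z i ω} = ENNReal.ofReal (Real.exp (-t)))
    (hαcont : ∀ i, ContinuousOn (α i) (Set.Ici 0))
    (ε : ℝ) (hε : 0 < ε) :
    P {ω | ∃ i j : Fin K, i ≠ j ∧
        |min (hitTime (α 0) (Z 0 ω)) (hitTime (α i.succ) (Z i.succ ω))
          - min (hitTime (α 0) (Z 0 ω)) (hitTime (α j.succ) (Z j.succ ω))| < ε}
      ≥ 1 - ENNReal.ofReal (Real.exp (-cumHaz (α 0) ((K - 1 : ℕ) * ε)) *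
          ∑ σ : Equiv.Perm (Fin K),
            Real.exp (-(∑ m : Fin (K - 1),
              cumHaz (α (σ (Fin.cast (Nat.succ_pred_eq_of_pos hK) m.succ)).succ) (((m : ℕ) + 1) * ε)))) := by
  set S := {ω | ∃ i j : Fin K, i ≠ j ∧
        |min (hitTime (α 0) (Z 0 ω)) (hitTime (α i.succ) (Z i.succ ω))
          - min (hitTime (α 0) (Z 0 ω)) (hitTime (α j.succ) (Z j.succ ω))| < ε}
  have hcover : Sᶜ ⊆ ⋃ σ : Equiv.Perm (Fin K),
      ⋂ i, Z i ⁻¹' lateLevels (α i) (permThreshold K ε σ i) := fun ω hω => by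
    simp only [S, mem_compl_iff, mem_ofPred_eq, not_exists, not_and, not_lt] at hω
    obtain ⟨σ, hσ⟩ := exists_perm_forall_mem_lateLevels hK hαcont (Z · ω) hω
    exact mem_iUnion.2 ⟨σ, mem_iInter.2 hσ⟩
  rw [ge_iff_le, tsub_le_iff_right, ← measure_univ (μ := P)]
  refine (measure_univ_le_add_compl S).trans (add_le_add_right ?_ _)
  calc
    P Sᶜ ≤ ∑ σ : Equiv.Perm (Fin K), P (⋂ i, Z i ⁻¹' lateLevels (α i) (permThreshold K ε σ i)) :=
      (measure_mono hcover).trans (measure_iUnion_fintype_le _ _)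
    _ ≤ ∑ σ : Equiv.Perm (Fin K),
        ENNReal.ofReal (Real.exp (-∑ i, cumHaz (α i) (permThreshold K ε σ i))) :=
      Finset.sum_le_sum fun σ _ =>
        measure_iInter_preimage_lateLevels_le hZindep hZexp α (permThreshold_nonneg hε.le σ)
    _ = _ := by
      rw [← ENNReal.ofReal_sum_of_nonneg fun _ _ => (Real.exp_pos _).le, Finset.mul_sum]
      simp_rw [sum_cumHaz_permThreshold hK, neg_add, Real.exp_add]

/-- (Permutation lower bound on the market failure probability.) For `ε > 0`,
`P(|τ_i − τ_j| < ε for some i ≠ j) ≥ 1 − e^{−A_0((K−1)ε)} ∑_{σ ∈ S_K}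
  exp (−∑_{i=1}^{K−1} A_{σ(i+1)}(iε))`.
(A Lean index `m : Fin (K-1)` corresponds to the paper's `i = m + 1`, so the paper's
`σ(i+1)` is `σ m.succ` and the argument `iε` is `(m+1)ε`.) -/
theorem market_failure_probability_permutation_lower_bound
    {Ω : Type*} [MeasurableSpace Ω] (P : Measure Ω) [IsProbabilityMeasure P]
    (K : ℕ) (hK : 0 < K) (Z : Fin (K + 1) → Ω → ℝ) (α : Fin (K + 1) → ℝ → ℝ)
    (hZmeas : ∀ i, Measurable (Z i))
    (hZindep : iIndepFun Z P)
    (hZexp : ∀ i, ∀ t : ℝ, 0 ≤ t → P {ω | t < Z i ω} = ENNReal.ofReal (Real.exp (-t)))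
    (hαpos : ∀ i t, 0 ≤ t → 0 < α i t)
    (hαcont : ∀ i, ContinuousOn (α i) (Set.Ici 0))
    (hAinf : ∀ i, Filter.Tendsto (cumHaz (α i)) Filter.atTop Filter.atTop)
    (ε : ℝ) (hε : 0 < ε) :
    P {ω | ∃ i j : Fin K, i ≠ j ∧
        |min (hitTime (α 0) (Z 0 ω)) (hitTime (α i.succ) (Z i.succ ω))
          - min (hitTime (α 0) (Z 0 ω)) (hitTime (α j.succ) (Z j.succ ω))| < ε}
      ≥ 1 - ENNReal.ofReal (Real.exp (-cumHaz (α 0) ((K - 1 : ℕ) * ε)) *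
          ∑ σ : Equiv.Perm (Fin K),
            Real.exp (-(∑ m : Fin (K - 1),
              cumHaz (α (σ (Fin.cast (Nat.succ_pred_eq_of_pos hK) m.succ)).succ) (((m : ℕ) + 1) * ε)))) :=
  market_failure_probability_permutation_lower_bound_general P K hK Z α hZindep hZexp hαcont ε hε
end

section
/- (Bounds with constant default intensities.) If each intensity is a positive constant α_i, then for every ε > 0: (a) the permutation lower bound becomes P(|τ_i − τ_j| < ε for some (i,j), i ≠ j) ≥ 1 − e^{−α_0 ε (K−1)} Σ_{σ ∈ S_K} exp(−ε Σ_{i=1}^{K−1} i·α_{σ(i+1)}); and (b) the pairwise lower bound becomes P(|τ_i − τ_j| < ε for some (i,j), i ≠ j) ≥ 1 − min_{i ≠ j} [ e^{−ε α_0} (α_i e^{−ε α_j} + α_j e^{−ε α_i}) / (α_i + α_j + α_0) ]. -/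
open MeasureTheory ProbabilityTheory

section MarketAuxSection
open Real Set

namespace MarketAux



lemma surv_Ioi (μ : Measure ℝ) [IsProbabilityMeasure μ]
    (h : ∀ t : ℝ, 0 ≤ t → μ (Ioi t) = ENNReal.ofReal (exp (-t))) (t : ℝ) :
    μ (Ioi t) = ENNReal.ofReal (exp (-(max t 0))) := by
  rcases le_or_gt 0 t with ht | ht
  · rw [max_eq_left ht]; exact h t ht
  · rw [max_eq_right ht.le]
    have h0 := h 0 le_rfl
    simp only [neg_zero, exp_zero, ENNReal.ofReal_one] at h0 ⊢
    exact le_antisymm prob_le_one (h0 ▸ measure_mono (Ioi_subset_Ioi ht.le))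

lemma surv_Ici (μ : Measure ℝ) [IsProbabilityMeasure μ]
    (h : ∀ t : ℝ, 0 ≤ t → μ (Ioi t) = ENNReal.ofReal (exp (-t))) (t : ℝ) :
    μ (Ici t) = ENNReal.ofReal (exp (-(max t 0))) := by
  have hset : Ici t = ⋂ n : ℕ, Ioi (t - 1 / (n + 1)) := by
    ext x
    simp only [mem_Ici, mem_iInter, mem_Ioi]
    constructor
    · intro hx n
      have : (0:ℝ) < 1 / (n + 1) := by positivity
      linarith
    · intro hx
      by_contra hlt
      push_neg at hlt
      obtain ⟨n, hn⟩ := exists_nat_one_div_lt (show (0:ℝ) < t - x by linarith)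
      have := hx n
      linarith
  have hanti : Antitone fun n : ℕ => Ioi (t - 1 / (n + 1 : ℝ)) := by
    intro m n hmn
    apply Ioi_subset_Ioi
    have h1 : (1:ℝ) / (n + 1) ≤ 1 / (m + 1) := by
      apply one_div_le_one_div_of_le (by positivity)
      exact_mod_cast by omega
    linarith
  have htend := tendsto_measure_iInter_atTop
    (fun n : ℕ => (measurableSet_Ioi (a := t - 1 / (n + 1 : ℝ))).nullMeasurableSet)
    hanti ⟨0, measure_ne_top μ _⟩
  rw [← hset] at htend
  have htend2 : Filter.Tendsto (fun n : ℕ => μ (Ioi (t - 1 / (n + 1 : ℝ)))) Filter.atTop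
      (nhds (ENNReal.ofReal (exp (-(max t 0))))) := by
    have heq : (fun n : ℕ => μ (Ioi (t - 1 / (n + 1 : ℝ))))
        = fun n : ℕ => ENNReal.ofReal (exp (-(max (t - 1 / (n + 1 : ℝ)) 0))) := by
      funext n; exact surv_Ioi μ h _
    rw [heq]
    have hc : Filter.Tendsto (fun n : ℕ => t - 1 / (n + 1 : ℝ)) Filter.atTop (nhds t) := by
      have := tendsto_one_div_add_atTop_nhds_zero_nat (𝕜 := ℝ)
      simpa using (tendsto_const_nhds (x := t)).sub this
    have : Filter.Tendsto (fun s : ℝ => ENNReal.ofReal (exp (-(max s 0)))) (nhds t)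
        (nhds (ENNReal.ofReal (exp (-(max t 0))))) := by
      apply Continuous.tendsto
      exact ENNReal.continuous_ofReal.comp ((continuous_id.max continuous_const).neg.rexp)
    exact this.comp hc
  exact tendsto_nhds_unique htend htend2



lemma expPDF_indicator : exponentialPDF 1 = (Ici (0:ℝ)).indicator (fun x => ENNReal.ofReal (exp (-x))) := by
  funext x
  rw [exponentialPDF_eq]
  by_cases hx : (0:ℝ) ≤ x
  · simp [indicator, hx]
  · simp [indicator, hx]

lemma expPDF_measurable : Measurable (exponentialPDF 1) :=
  (measurable_exponentialPDFReal 1).ennreal_ofReal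

lemma nu_Ici (t : ℝ) :
    (volume.withDensity (exponentialPDF 1)) (Ici t) = ENNReal.ofReal (exp (-(max t 0))) := by
  rw [withDensity_apply _ measurableSet_Ici, expPDF_indicator]
  rw [lintegral_indicator measurableSet_Ici _, Measure.restrict_restrict measurableSet_Ici]
  rw [Ici_inter_Ici]
  have : max 0 t = max t 0 := max_comm 0 t
  rw [show (0:ℝ) ⊔ t = max t 0 from this]
  rw [setLIntegral_congr (Ioi_ae_eq_Ici (a := max t 0)).symm]
  rw [← ofReal_integral_eq_lintegral_ofReal]
  · rw [integral_exp_neg_Ioi]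
  · have := exp_neg_integrableOn_Ioi (max t 0) (zero_lt_one)
    simpa [IntegrableOn] using this
  · exact Filter.Eventually.of_forall fun x => (exp_pos _).le

lemma law_eq (μ : Measure ℝ) [IsProbabilityMeasure μ]
    (h : ∀ t : ℝ, 0 ≤ t → μ (Ioi t) = ENNReal.ofReal (exp (-t))) :
    μ = volume.withDensity (exponentialPDF 1) := by
  apply Measure.ext_of_Ici
  intro a
  rw [surv_Ici μ h a, nu_Ici]

lemma lint_exp (μ : Measure ℝ) [IsProbabilityMeasure μ]
    (h : ∀ t : ℝ, 0 ≤ t → μ (Ioi t) = ENNReal.ofReal (exp (-t)))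
    {b : ℝ} (hb : 0 < b) (c : ℝ) :
    ∫⁻ x, ENNReal.ofReal (exp (-(b * x + c))) ∂μ = ENNReal.ofReal (exp (-c) / (b + 1)) := by
  rw [law_eq μ h]
  rw [lintegral_withDensity_eq_lintegral_mul volume expPDF_measurable (by fun_prop)]
  have heq : (fun x => (exponentialPDF 1 * fun x => ENNReal.ofReal (exp (-(b * x + c)))) x)
      = (Ici (0:ℝ)).indicator (fun x => ENNReal.ofReal (exp (-((b+1) * x + c)))) := by
    funext x
    simp only [Pi.mul_apply, expPDF_indicator]
    by_cases hx : x ∈ Ici (0:ℝ)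
    · rw [indicator_of_mem hx, indicator_of_mem hx, ← ENNReal.ofReal_mul (exp_pos _).le,
        ← exp_add]
      ring_nf
    · rw [indicator_of_notMem hx, indicator_of_notMem hx, zero_mul]
  rw [heq, lintegral_indicator measurableSet_Ici _,
    setLIntegral_congr (Ioi_ae_eq_Ici (a := (0:ℝ))).symm]
  have hint : IntegrableOn (fun x : ℝ => exp (-((b+1) * x + c))) (Ioi 0) := by
    have : (fun x : ℝ => exp (-((b+1) * x + c))) = fun x => exp (-c) * exp (-(b+1) * x) := by
      funext x; rw [← exp_add]; ring_nf
    rw [this]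
    exact (exp_neg_integrableOn_Ioi 0 (by linarith)).const_mul _
  rw [← ofReal_integral_eq_lintegral_ofReal hint
    (Filter.Eventually.of_forall fun x => (exp_pos _).le)]
  congr 1
  have : (fun x : ℝ => exp (-((b+1) * x + c))) = fun x => exp (-c) * exp (-((b+1) * x)) := by
    funext x; rw [← exp_add]; ring_nf
  rw [this, integral_const_mul]
  have := integral_comp_mul_left_Ioi (fun y : ℝ => exp (-y)) 0 (show (0:ℝ) < b + 1 by linarith)
  simp only [mul_zero] at this
  rw [this, integral_exp_neg_Ioi]
  simp only [neg_zero, exp_zero, smul_eq_mul, mul_one]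
  rw [div_eq_mul_inv]


lemma pairBound {Ω : Type*} [MeasurableSpace Ω] (P : Measure Ω) [IsProbabilityMeasure P]
    {n : ℕ} (Z : Fin n → Ω → ℝ) (α : Fin n → ℝ)
    (hZmeas : ∀ i, Measurable (Z i))
    (hZindep : iIndepFun Z P)
    (hZexp : ∀ i, ∀ t : ℝ, 0 ≤ t → P {ω | t < Z i ω} = ENNReal.ofReal (Real.exp (-t)))
    (hαpos : ∀ i, 0 < α i) {ε : ℝ} (hε : 0 < ε)
    {a b z : Fin n} (hab : a ≠ b) (haz : a ≠ z) (hbz : b ≠ z) :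
    P {ω | α b * (Z a ω / α a + ε) ≤ Z b ω ∧ α z * (Z a ω / α a + ε) ≤ Z z ω}
      ≤ ENNReal.ofReal (exp (-((α b + α z) * ε)) * α a / (α a + α b + α z)) := by
  have hsurv : ∀ i : Fin n, ∀ t : ℝ, 0 ≤ t →
      (P.map (Z i)) (Ioi t) = ENNReal.ofReal (exp (-t)) := by
    intro i t ht
    rw [Measure.map_apply (hZmeas i) measurableSet_Ioi]
    exact hZexp i t ht
  haveI hPa : IsProbabilityMeasure (P.map (Z a)) :=
    Measure.isProbabilityMeasure_map (hZmeas a).aemeasurable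
  haveI hPb : IsProbabilityMeasure (P.map (Z b)) :=
    Measure.isProbabilityMeasure_map (hZmeas b).aemeasurable
  haveI hPz : IsProbabilityMeasure (P.map (Z z)) :=
    Measure.isProbabilityMeasure_map (hZmeas z).aemeasurable
  -- Ici bounds for b and z
  have hIci : ∀ i : Fin n, ∀ t : ℝ, (P.map (Z i)) (Ici t) ≤ ENNReal.ofReal (exp (-t)) := by
    intro i t
    haveI : IsProbabilityMeasure (P.map (Z i)) := Measure.isProbabilityMeasure_map (hZmeas i).aemeasurable
    rw [surv_Ici (P.map (Z i)) (hsurv i) t]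
    exact ENNReal.ofReal_le_ofReal (exp_le_exp.2 (neg_le_neg (le_max_left _ _)))
  -- independence maps
  have hI : IndepFun (Z a) (fun ω => (Z b ω, Z z ω)) P :=
    (hZindep.indepFun_prodMk hZmeas b z a hab.symm haz.symm).symm
  have hmap : P.map (fun ω => (Z a ω, (Z b ω, Z z ω)))
      = (P.map (Z a)).prod (P.map (fun ω => (Z b ω, Z z ω))) :=
    (indepFun_iff_map_prod_eq_prod_map_map (hZmeas a).aemeasurable
      ((hZmeas b).prodMk (hZmeas z)).aemeasurable).mp hI
  have hmap2 : P.map (fun ω => (Z b ω, Z z ω)) = (P.map (Z b)).prod (P.map (Z z)) :=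
    (indepFun_iff_map_prod_eq_prod_map_map (hZmeas b).aemeasurable
      (hZmeas z).aemeasurable).mp (hZindep.indepFun hbz)
  set S' : Set (ℝ × ℝ × ℝ) :=
    {p | α b * (p.1 / α a + ε) ≤ p.2.1} ∩ {p | α z * (p.1 / α a + ε) ≤ p.2.2} with hS'def
  have hS' : MeasurableSet S' := by
    apply MeasurableSet.inter
    · exact measurableSet_le (by fun_prop) (by fun_prop)
    · exact measurableSet_le (by fun_prop) (by fun_prop)
  have hev : {ω | α b * (Z a ω / α a + ε) ≤ Z b ω ∧ α z * (Z a ω / α a + ε) ≤ Z z ω}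
      = (fun ω => (Z a ω, (Z b ω, Z z ω))) ⁻¹' S' := rfl
  rw [hev, ← Measure.map_apply ((hZmeas a).prodMk ((hZmeas b).prodMk (hZmeas z))) hS',
    hmap, hmap2, Measure.prod_apply hS']
  have hslice : ∀ x : ℝ, Prod.mk x ⁻¹' S'
      = Ici (α b * (x / α a + ε)) ×ˢ Ici (α z * (x / α a + ε)) := by
    intro x; ext q
    simp [hS'def, Set.mem_prod, Set.mem_Ici, Prod.le_def]
  calc ∫⁻ x, ((P.map (Z b)).prod (P.map (Z z))) (Prod.mk x ⁻¹' S') ∂(P.map (Z a))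
      ≤ ∫⁻ x, ENNReal.ofReal (exp (-((α b + α z) / α a * x + (α b + α z) * ε))) ∂(P.map (Z a)) := by
        apply lintegral_mono
        intro x
        dsimp only
        rw [hslice x, Measure.prod_prod]
        calc (P.map (Z b)) (Ici (α b * (x / α a + ε))) * (P.map (Z z)) (Ici (α z * (x / α a + ε)))
            ≤ ENNReal.ofReal (exp (-(α b * (x / α a + ε))))
              * ENNReal.ofReal (exp (-(α z * (x / α a + ε)))) :=
              mul_le_mul' (hIci b _) (hIci z _)
          _ = ENNReal.ofReal (exp (-((α b + α z) / α a * x + (α b + α z) * ε))) := by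
              rw [← ENNReal.ofReal_mul (exp_pos _).le, ← exp_add]
              congr 2
              have ha' : α a ≠ 0 := (hαpos a).ne'
              field_simp
              ring
    _ = ENNReal.ofReal (exp (-((α b + α z) * ε)) / ((α b + α z) / α a + 1)) :=
        lint_exp (P.map (Z a)) (hsurv a)
          (div_pos (by linarith [hαpos b, hαpos z]) (hαpos a)) _
    _ = ENNReal.ofReal (exp (-((α b + α z) * ε)) * α a / (α a + α b + α z)) := by
        congr 1
        have ha' : α a ≠ 0 := (hαpos a).ne'
        rw [show (α b + α z) / α a + 1 = (α a + α b + α z) / α a by field_simp; ring,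
          div_div_eq_mul_div]


lemma exists_perm_gap {n : ℕ} (hn : 0 < n) (f : Fin n → ℝ) {ε : ℝ}
    (hsep : ∀ i j : Fin n, i ≠ j → ε ≤ |f i - f j|) :
    ∃ σ : Equiv.Perm (Fin n), ∀ k : Fin n,
      (k : ℝ) * ε + f (σ ⟨0, hn⟩) ≤ f (σ k) := by
  refine ⟨Tuple.sort f, ?_⟩
  have key : ∀ m : ℕ, ∀ hm : m < n,
      (m : ℝ) * ε + f (Tuple.sort f ⟨0, hn⟩) ≤ f (Tuple.sort f ⟨m, hm⟩) := by
    intro m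
    induction m with
    | zero => intro hm; simp
    | succ p ih =>
      intro hm
      have hp : p < n := by omega
      have mono : f (Tuple.sort f ⟨p, hp⟩) ≤ f (Tuple.sort f ⟨p + 1, hm⟩) :=
        Tuple.monotone_sort f (show (⟨p, hp⟩ : Fin n) ≤ ⟨p + 1, hm⟩ by
          simp [Fin.mk_le_mk])
      have hne : Tuple.sort f ⟨p + 1, hm⟩ ≠ Tuple.sort f ⟨p, hp⟩ := by
        intro hcon
        have := (Tuple.sort f).injective hcon
        simp [Fin.mk.injEq] at this
      have hab := hsep _ _ hne
      rw [abs_of_nonneg (by linarith)] at hab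
      have := ih hp
      push_cast
      linarith
  intro k
  exact key k.1 k.2


lemma ofReal_prod_exp {ι : Type*} (s : Finset ι) (g : ι → ℝ) :
    ∏ i ∈ s, ENNReal.ofReal (exp (g i)) = ENNReal.ofReal (exp (∑ i ∈ s, g i)) := by
  classical
  induction s using Finset.cons_induction with
  | empty => simp
  | cons a s ha ih =>
    rw [Finset.prod_cons, Finset.sum_cons, ih, ← ENNReal.ofReal_mul (exp_pos _).le, ← exp_add]

lemma permBound {Ω : Type*} [MeasurableSpace Ω] (P : Measure Ω) [IsProbabilityMeasure P]
    (K : ℕ) (hK : 2 ≤ K) (Z : Fin (K + 1) → Ω → ℝ) (α : Fin (K + 1) → ℝ)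
    (hZmeas : ∀ i, Measurable (Z i))
    (hZindep : iIndepFun Z P)
    (hZexp : ∀ i, ∀ t : ℝ, 0 ≤ t → P {ω | t < Z i ω} = ENNReal.ofReal (Real.exp (-t)))
    (hαpos : ∀ i, 0 < α i)
    (ε : ℝ) (hε : 0 < ε) :
    P {ω | ∀ i j : Fin K, i ≠ j →
        ε ≤ |min (Z 0 ω / α 0) (Z i.succ ω / α i.succ)
          - min (Z 0 ω / α 0) (Z j.succ ω / α j.succ)|}
      ≤ ENNReal.ofReal (Real.exp (-(α 0) * ε * (K - 1 : ℕ)) *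
          ∑ σ : Equiv.Perm (Fin K),
            Real.exp (-ε * ∑ m : Fin (K - 1),
              ((m : ℕ) + 1 : ℝ) *
                α (σ (Fin.cast (Nat.succ_pred_eq_of_pos (lt_of_lt_of_le two_pos hK : 0 < K)) m.succ)).succ)) := by
  classical
  have hK0 : 0 < K := by omega
  set c : Equiv.Perm (Fin K) → Fin (K + 1) → ℝ := fun σ =>
    Fin.cases (α 0 * (((K - 1 : ℕ) : ℝ) * ε))
      (fun j => α j.succ * (((σ.symm j : ℕ) : ℝ) * ε)) with hc
  have hc0 : ∀ σ, c σ 0 = α 0 * (((K - 1 : ℕ) : ℝ) * ε) := fun σ => rfl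
  have hcs : ∀ σ (j : Fin K), c σ j.succ = α j.succ * (((σ.symm j : ℕ) : ℝ) * ε) :=
    fun σ j => by simp [hc]
  have hcnn : ∀ σ i, 0 ≤ c σ i := by
    intro σ i
    induction i using Fin.cases with
    | zero =>
      rw [hc0]
      exact mul_nonneg (hαpos 0).le (mul_nonneg (Nat.cast_nonneg _) hε.le)
    | succ j =>
      rw [hcs]
      exact mul_nonneg (hαpos _).le (mul_nonneg (Nat.cast_nonneg _) hε.le)
  set E : Equiv.Perm (Fin K) → Set Ω := fun σ => ⋂ i, Z i ⁻¹' Ioi (c σ i) with hE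
  have hPE : ∀ σ, P (E σ) = ∏ i, ENNReal.ofReal (exp (-(c σ i))) := by
    intro σ
    rw [hE]
    rw [hZindep.meas_iInter (fun i => ⟨Ioi (c σ i), measurableSet_Ioi, rfl⟩)]
    refine Finset.prod_congr rfl fun i _ => ?_
    have : Z i ⁻¹' Ioi (c σ i) = {ω | c σ i < Z i ω} := rfl
    rw [this, hZexp i _ (hcnn σ i)]
  have hnull : P (⋃ i, {ω | Z i ω ≤ 0}) = 0 := by
    refine measure_iUnion_null fun i => ?_
    have hmeq : {ω | Z i ω ≤ 0} = {ω | 0 < Z i ω}ᶜ := by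
      ext ω; simp
    have hms : MeasurableSet {ω | 0 < Z i ω} := hZmeas i measurableSet_Ioi
    rw [hmeq, measure_compl hms (measure_ne_top P _), measure_univ]
    have := hZexp i 0 le_rfl
    rw [this]
    simp
  have hsub : {ω | ∀ i j : Fin K, i ≠ j →
        ε ≤ |min (Z 0 ω / α 0) (Z i.succ ω / α i.succ)
          - min (Z 0 ω / α 0) (Z j.succ ω / α j.succ)|}
      ⊆ (⋃ σ, E σ) ∪ ⋃ i, {ω | Z i ω ≤ 0} := by
    intro ω hω
    by_cases hpos : ∀ i, 0 < Z i ω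
    swap
    · right
      push_neg at hpos
      obtain ⟨i, hi⟩ := hpos
      exact mem_iUnion.2 ⟨i, hi⟩
    left
    set f : Fin K → ℝ := fun i => min (Z 0 ω / α 0) (Z i.succ ω / α i.succ) with hf
    obtain ⟨σ, hσ⟩ := exists_perm_gap hK0 f (fun i j hij => hω i j hij)
    have hf0pos : 0 < f (σ ⟨0, hK0⟩) :=
      lt_min (div_pos (hpos 0) (hαpos 0)) (div_pos (hpos _) (hαpos _))
    refine mem_iUnion.2 ⟨σ, mem_iInter.2 fun i => ?_⟩
    induction i using Fin.cases with
    | zero =>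
      show c σ 0 < Z 0 ω
      have hlast := hσ ⟨K - 1, by omega⟩
      have hcast : (((⟨K - 1, by omega⟩ : Fin K)) : ℝ) = ((K - 1 : ℕ) : ℝ) := rfl
      rw [hcast] at hlast
      have hle : f (σ ⟨K - 1, by omega⟩) ≤ Z 0 ω / α 0 := min_le_left _ _
      have : ((K - 1 : ℕ) : ℝ) * ε < Z 0 ω / α 0 := by linarith
      rw [hc0]
      rw [lt_div_iff₀ (hαpos 0)] at this
      linarith [this]
    | succ j =>
      show c σ j.succ < Z j.succ ω
      have hk := hσ (σ.symm j)
      rw [Equiv.apply_symm_apply] at hk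
      have hle : f j ≤ Z j.succ ω / α j.succ := min_le_right _ _
      have : ((σ.symm j : ℕ) : ℝ) * ε < Z j.succ ω / α j.succ := by linarith
      rw [hcs]
      rw [lt_div_iff₀ (hαpos j.succ)] at this
      linarith [this]
  calc P {ω | ∀ i j : Fin K, i ≠ j →
        ε ≤ |min (Z 0 ω / α 0) (Z i.succ ω / α i.succ)
          - min (Z 0 ω / α 0) (Z j.succ ω / α j.succ)|}
      ≤ P ((⋃ σ, E σ) ∪ ⋃ i, {ω | Z i ω ≤ 0}) := measure_mono hsub
    _ ≤ P (⋃ σ, E σ) + P (⋃ i, {ω | Z i ω ≤ 0}) := measure_union_le _ _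
    _ = P (⋃ σ, E σ) := by rw [hnull, add_zero]
    _ ≤ ∑ σ : Equiv.Perm (Fin K), P (E σ) := by
        have : (⋃ σ, E σ) = ⋃ σ ∈ (Finset.univ : Finset (Equiv.Perm (Fin K))), E σ := by
          simp
        rw [this]
        exact measure_biUnion_finset_le _ _
    _ = ENNReal.ofReal (Real.exp (-(α 0) * ε * (K - 1 : ℕ)) *
          ∑ σ : Equiv.Perm (Fin K),
            Real.exp (-ε * ∑ m : Fin (K - 1),
              ((m : ℕ) + 1 : ℝ) *
                α (σ (Fin.cast (Nat.succ_pred_eq_of_pos (lt_of_lt_of_le two_pos hK : 0 < K)) m.succ)).succ)) := by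
        rw [Finset.mul_sum, ENNReal.ofReal_sum_of_nonneg
          (fun σ _ => mul_nonneg (exp_pos _).le (exp_pos _).le)]
        refine Finset.sum_congr rfl fun σ _ => ?_
        rw [hPE σ]
        have h1 : ∀ i : Fin (K+1), ENNReal.ofReal (exp (-(c σ i)))
            = ENNReal.ofReal (exp ((fun i => -(c σ i)) i)) := fun i => rfl
        rw [ofReal_prod_exp Finset.univ (fun i => -(c σ i))]
        congr 1
        rw [← exp_add]
        congr 1
        -- sum identity
        have hsum : ∑ i : Fin (K+1), -(c σ i)
            = -(c σ 0) + ∑ j : Fin K, -(c σ j.succ) := by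
          rw [Fin.sum_univ_succ]
        rw [hsum, hc0]
        have hre : ∑ j : Fin K, -(c σ j.succ) = ∑ k : Fin K, -(c σ (σ k).succ) :=
          (Equiv.sum_comp σ (fun j => -(c σ j.succ))).symm
        rw [hre]
        have hterm : ∀ k : Fin K, -(c σ (σ k).succ) = -ε * ((k : ℝ) * α (σ k).succ) := by
          intro k
          rw [hcs, Equiv.symm_apply_apply]
          ring
        rw [Finset.sum_congr rfl (fun k _ => hterm k), ← Finset.mul_sum]
        have hcastK : (K - 1) + 1 = K := Nat.succ_pred_eq_of_pos hK0
        have hreindex : ∑ k : Fin K, (k : ℝ) * α (σ k).succ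
            = ∑ m : Fin (K - 1), ((m : ℕ) + 1 : ℝ)
                * α (σ (Fin.cast hcastK m.succ)).succ := by
          rw [← Equiv.sum_comp (finCongr hcastK) (fun k : Fin K => (k : ℝ) * α (σ k).succ)]
          rw [Fin.sum_univ_succ]
          have h0 : ((finCongr hcastK 0 : Fin K) : ℝ) = 0 := by
            simp
          rw [h0, zero_mul, zero_add]
          refine Finset.sum_congr rfl fun m _ => ?_
          have : ((finCongr hcastK m.succ : Fin K) : ℝ) = ((m : ℕ) + 1 : ℝ) := by
            simp
          rw [this, finCongr_apply]
        rw [hreindex]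
        ring
  -- done

end MarketAux
end MarketAuxSection

/-- (Lower bounds with constant default intensities.) With constant positive
intensities, `η_i = Z_i / α_i` and `τ_i = min (η_0, η_i)`, for every `ε > 0`:
(a) the permutation lower bound
`P(|τ_i − τ_j| < ε for some i ≠ j) ≥ 1 − e^{−α_0 ε (K−1)} ∑_{σ ∈ S_K} exp (−ε ∑_{i=1}^{K−1} i α_{σ(i+1)})`;
(b) the pairwise lower bound
`P(|τ_i − τ_j| < ε for some i ≠ j) ≥ 1 − min_{i ≠ j} e^{−ε α_0} (α_i e^{−ε α_j} + α_j e^{−ε α_i}) / (α_i + α_j + α_0)`.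
(A Lean index `m : Fin (K-1)` corresponds to the paper's `i = m + 1`.) -/
theorem market_failure_lower_bounds_constant_intensities
    {Ω : Type*} [MeasurableSpace Ω] (P : Measure Ω) [IsProbabilityMeasure P]
    (K : ℕ) (hK : 2 ≤ K) (Z : Fin (K + 1) → Ω → ℝ) (α : Fin (K + 1) → ℝ)
    (hZmeas : ∀ i, Measurable (Z i))
    (hZindep : iIndepFun Z P)
    (hZexp : ∀ i, ∀ t : ℝ, 0 ≤ t → P {ω | t < Z i ω} = ENNReal.ofReal (Real.exp (-t)))
    (hαpos : ∀ i, 0 < α i)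
    (ε : ℝ) (hε : 0 < ε) :
    P {ω | ∃ i j : Fin K, i ≠ j ∧
        |min (Z 0 ω / α 0) (Z i.succ ω / α i.succ)
          - min (Z 0 ω / α 0) (Z j.succ ω / α j.succ)| < ε}
      ≥ 1 - ENNReal.ofReal (Real.exp (-(α 0) * ε * (K - 1 : ℕ)) *
          ∑ σ : Equiv.Perm (Fin K),
            Real.exp (-ε * ∑ m : Fin (K - 1),
              ((m : ℕ) + 1 : ℝ) *
                α (σ (Fin.cast (Nat.succ_pred_eq_of_pos (by omega : 0 < K)) m.succ)).succ))
    ∧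
    P {ω | ∃ i j : Fin K, i ≠ j ∧
        |min (Z 0 ω / α 0) (Z i.succ ω / α i.succ)
          - min (Z 0 ω / α 0) (Z j.succ ω / α j.succ)| < ε}
      ≥ 1 - ENNReal.ofReal (sInf {r : ℝ | ∃ i j : Fin K, i ≠ j ∧
          r = Real.exp (-ε * α 0) *
              (α i.succ * Real.exp (-ε * α j.succ) + α j.succ * Real.exp (-ε * α i.succ)) /
              (α i.succ + α j.succ + α 0)}) := by
  classical
  set A : Set Ω := {ω | ∃ i j : Fin K, i ≠ j ∧
      |min (Z 0 ω / α 0) (Z i.succ ω / α i.succ)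
        - min (Z 0 ω / α 0) (Z j.succ ω / α j.succ)| < ε} with hA
  have hlow : ∀ B : ENNReal, P Aᶜ ≤ B → 1 - B ≤ P A := by
    intro B hB
    rw [tsub_le_iff_right]
    calc (1 : ENNReal) = P Set.univ := measure_univ.symm
      _ = P (A ∪ Aᶜ) := by rw [Set.union_compl_self]
      _ ≤ P A + P Aᶜ := measure_union_le _ _
      _ ≤ P A + B := add_le_add le_rfl hB
  have hcompl : Aᶜ ⊆ {ω | ∀ i j : Fin K, i ≠ j →
      ε ≤ |min (Z 0 ω / α 0) (Z i.succ ω / α i.succ)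
        - min (Z 0 ω / α 0) (Z j.succ ω / α j.succ)|} := by
    intro ω hω i j hij
    by_contra hlt
    exact hω ⟨i, j, hij, not_le.mp hlt⟩
  constructor
  · -- part (a)
    exact hlow _ ((measure_mono hcompl).trans
      (MarketAux.permBound P K hK Z α hZmeas hZindep hZexp hαpos ε hε))
  · -- part (b)
    set Sset : Set ℝ := {r : ℝ | ∃ i j : Fin K, i ≠ j ∧
        r = Real.exp (-ε * α 0) *
            (α i.succ * Real.exp (-ε * α j.succ) + α j.succ * Real.exp (-ε * α i.succ)) /
            (α i.succ + α j.succ + α 0)} with hSset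
    have hne : Sset.Nonempty := by
      refine ⟨_, ⟨⟨0, by omega⟩, ⟨1, by omega⟩, ?_, rfl⟩⟩
      intro h
      have := congrArg Fin.val h
      simp at this
    have hfin : Sset.Finite := by
      apply Set.Finite.subset (Set.finite_range
        (fun p : Fin K × Fin K => Real.exp (-ε * α 0) *
          (α p.1.succ * Real.exp (-ε * α p.2.succ) + α p.2.succ * Real.exp (-ε * α p.1.succ)) /
          (α p.1.succ + α p.2.succ + α 0)))
      rintro r ⟨i, j, hij, rfl⟩
      exact ⟨(i, j), rfl⟩
    obtain ⟨i, j, hij, hrval⟩ := hne.csInf_mem hfin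
    apply hlow
    rw [hrval]
    -- pairwise bound
    set B1 : Set Ω := {ω | α j.succ * (Z i.succ ω / α i.succ + ε) ≤ Z j.succ ω ∧
        α 0 * (Z i.succ ω / α i.succ + ε) ≤ Z 0 ω} with hB1
    set B2 : Set Ω := {ω | α i.succ * (Z j.succ ω / α j.succ + ε) ≤ Z i.succ ω ∧
        α 0 * (Z j.succ ω / α j.succ + ε) ≤ Z 0 ω} with hB2
    have hsub : Aᶜ ⊆ B1 ∪ B2 := by
      intro ω hω
      have hsep := hcompl hω i j hij
      set u := Z 0 ω / α 0 with hu
      set x := Z i.succ ω / α i.succ with hx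
      set y := Z j.succ ω / α j.succ with hy
      have hBmem : (x + ε ≤ y ∧ x + ε ≤ u) ∨ (y + ε ≤ x ∧ y + ε ≤ u) := by
        rcases le_total (min u x) (min u y) with hle | hle
        · left
          rw [abs_of_nonpos (by linarith)] at hsep
          have h1 : min u x + ε ≤ min u y := by linarith
          have hminx : min u x = x := by
            rcases min_choice u x with h | h
            · exfalso; rw [h] at h1; linarith [min_le_left u y]
            · exact h
          rw [hminx] at h1
          exact ⟨h1.trans (min_le_right _ _), h1.trans (min_le_left _ _)⟩
        · right
          rw [abs_of_nonneg (by linarith)] at hsep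
          have h1 : min u y + ε ≤ min u x := by linarith
          have hminy : min u y = y := by
            rcases min_choice u y with h | h
            · exfalso; rw [h] at h1; linarith [min_le_left u x]
            · exact h
          rw [hminy] at h1
          exact ⟨h1.trans (min_le_right _ _), h1.trans (min_le_left _ _)⟩
      rcases hBmem with ⟨h1, h2⟩ | ⟨h1, h2⟩
      · left
        refine ⟨?_, ?_⟩
        · rw [mul_comm]; exact (le_div_iff₀ (hαpos j.succ)).mp h1
        · rw [mul_comm]; exact (le_div_iff₀ (hαpos 0)).mp h2
      · right
        refine ⟨?_, ?_⟩
        · rw [mul_comm]; exact (le_div_iff₀ (hαpos i.succ)).mp h1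
        · rw [mul_comm]; exact (le_div_iff₀ (hαpos 0)).mp h2
    have hij' : i.succ ≠ j.succ := fun h => hij (Fin.succ_inj.mp h)
    have hb1 := MarketAux.pairBound P Z α hZmeas hZindep hZexp hαpos hε
      hij' (Fin.succ_ne_zero i) (Fin.succ_ne_zero j)
    have hb2 := MarketAux.pairBound P Z α hZmeas hZindep hZexp hαpos hε
      hij'.symm (Fin.succ_ne_zero j) (Fin.succ_ne_zero i)
    have hd1 : (0:ℝ) < α i.succ + α j.succ + α 0 := by
      have := hαpos i.succ; have := hαpos j.succ; have := hαpos 0; linarith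
    calc P Aᶜ ≤ P (B1 ∪ B2) := measure_mono hsub
      _ ≤ P B1 + P B2 := measure_union_le _ _
      _ ≤ ENNReal.ofReal (Real.exp (-((α j.succ + α 0) * ε)) * α i.succ
            / (α i.succ + α j.succ + α 0))
          + ENNReal.ofReal (Real.exp (-((α i.succ + α 0) * ε)) * α j.succ
            / (α j.succ + α i.succ + α 0)) := add_le_add hb1 hb2
      _ = ENNReal.ofReal (Real.exp (-ε * α 0) *
            (α i.succ * Real.exp (-ε * α j.succ) + α j.succ * Real.exp (-ε * α i.succ)) /
            (α i.succ + α j.succ + α 0)) := by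
          rw [← ENNReal.ofReal_add
            (div_nonneg (mul_nonneg (Real.exp_pos _).le (hαpos i.succ).le) (by linarith))
            (div_nonneg (mul_nonneg (Real.exp_pos _).le (hαpos j.succ).le) (by linarith))]
          congr 1
          rw [show -((α j.succ + α 0) * ε) = (-ε * α j.succ) + (-ε * α 0) by ring, Real.exp_add,
            show -((α i.succ + α 0) * ε) = (-ε * α i.succ) + (-ε * α 0) by ring, Real.exp_add,
            show α j.succ + α i.succ + α 0 = α i.succ + α j.succ + α 0 by ring,
            ← add_div]
          congr 1
          ring
end
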